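/- arXiv:0808.2635 — 2 statements merged into one kernel-verified Lean document; each statement's English description precedes it below -/
import Mathlib

section
/- The linear transformation on real polynomials defined by sending x^k to x^k/k! maps every polynomial with all real roots to a polynomial with all real roots. -/
open Polynomial

/-- A real polynomial has all real roots: every complex root is real. -/
def AllRealRoots (p : ℝ[X]) : Prop :=
  ∀ z : ℂ, (p.map (algebraMap ℝ ℂ)).IsRoot z → z.im = 0

/-- The map sending x^k to x^k/k!. -/
noncomputable def Tfac (p : ℝ[X]) : ℝ[X] :=
  ∑ k ∈ Finset.range (p.natDegree + 1),
    Polynomial.C (p.coeff k / (Nat.factorial k)) * Polynomial.X ^ k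

/-- The n-th Laguerre polynomial (explicit formula). -/
noncomputable def laguerre (n : ℕ) : ℝ[X] :=
  ∑ k ∈ Finset.range (n + 1),
    Polynomial.C ((-1 : ℝ) ^ k * (n.choose k) / (Nat.factorial k)) * Polynomial.X ^ k

open scoped Nat

/-!
Write `p = c ∏ (X - aᵢ)`. Since `D (T (X q)) = T q`, we get `T ((X - a) q) = (1 - a D) T (X q)`, so
`T p` arises from `T (c Xⁿ) = c Xⁿ / n!` by applying the operators `1 - aᵢ D` one at a time. Each of
them preserves real-rootedness: at a non-real root `z` of `g - a g'` we would have
`g'(z) / g(z) = ∑ 1 / (z - w) = 1 / a` (sum over the roots `w` of `g`), which is real, whereas every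
summand has imaginary part of sign opposite to `Im z`.
-/

lemma coeff_Tfac (p : ℝ[X]) (k : ℕ) : (Tfac p).coeff k = p.coeff k / k ! := by
  simp only [Tfac, finsetSum_coeff, coeff_C_mul_X_pow, Finset.sum_ite_eq, Finset.mem_range]
  split_ifs with hk
  · rfl
  · rw [coeff_eq_zero_of_natDegree_lt (by omega), zero_div]

lemma derivative_Tfac_X_mul (q : ℝ[X]) : derivative (Tfac (X * q)) = Tfac q := by
  ext k
  rw [coeff_derivative, coeff_Tfac, coeff_Tfac, coeff_X_mul, Nat.factorial_succ]
  push_cast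
  field_simp

lemma Tfac_X_sub_C_mul (a : ℝ) (q : ℝ[X]) :
    Tfac ((X - C a) * q) = Tfac (X * q) - C a * derivative (Tfac (X * q)) := by
  ext k
  simp only [derivative_Tfac_X_mul, coeff_sub, coeff_C_mul, coeff_Tfac, sub_mul]
  ring

lemma Tfac_C_mul_X_pow (c : ℝ) (m : ℕ) : Tfac (C c * X ^ m) = C (c / m !) * X ^ m := by
  ext k
  simp only [coeff_Tfac, coeff_C_mul_X_pow]
  split_ifs <;> simp_all

lemma AllRealRoots.ne_zero {p : ℝ[X]} (hp : AllRealRoots p) : p ≠ 0 := by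
  rintro rfl
  simpa using hp Complex.I (by simp)

lemma AllRealRoots.splits {p : ℝ[X]} (hp : AllRealRoots p) : Splits p :=
  Splits.of_splits_map_of_injective (algebraMap ℝ ℂ).injective (IsAlgClosed.splits _)
    fun z hz => ⟨z.re, Complex.ext rfl (hp z (mem_roots'.mp hz).2).symm⟩

lemma allRealRoots_C_mul_X_pow {c : ℝ} (hc : c ≠ 0) (m : ℕ) : AllRealRoots (C c * X ^ m) := by
  intro z hz
  simp_all

lemma Complex.im_sum_one_div_sub_ne_zero {z : ℂ} (hz : z.im ≠ 0) {s : Multiset ℂ}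
    (hs : ∀ w ∈ s, w.im = 0) (hne : s ≠ 0) : (s.map fun w => 1 / (z - w)).sum.im ≠ 0 := by
  have him : (s.map fun w => 1 / (z - w)).sum.im
      = -z.im * (s.map fun w => 1 / normSq (z - w)).sum := by
    rw [← Multiset.sum_map_mul_left, ← coe_imAddGroupHom, map_multiset_sum, Multiset.map_map]
    refine congrArg Multiset.sum (Multiset.map_congr rfl fun w hw => ?_)
    simp [inv_im, hs w hw, div_eq_mul_inv]
  have hpos : 0 < (s.map fun w => 1 / normSq (z - w)).sum := by
    obtain ⟨w, hw⟩ := Multiset.exists_mem_of_ne_zero hne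
    have hzw : z - w ≠ 0 := fun h => hz (by simpa [hs w hw] using congrArg im h)
    refine (one_div_pos.mpr (normSq_pos.mpr hzw)).trans_le <|
      Multiset.single_le_sum ?_ _ (Multiset.mem_map_of_mem _ hw)
    simp only [Multiset.mem_map, forall_exists_index, and_imp, forall_apply_eq_imp_iff₂]
    exact fun v _ => one_div_nonneg.mpr (normSq_nonneg _)
  rw [him]
  exact mul_ne_zero (neg_ne_zero.mpr hz) hpos.ne'

lemma AllRealRoots.sub_C_mul_derivative {g : ℝ[X]} (hg : AllRealRoots g) (a : ℝ) :
    AllRealRoots (g - C a * derivative g) := by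
  intro z hz
  by_contra hzim
  set G := g.map (algebraMap ℝ ℂ)
  have hGz : G.eval z ≠ 0 := fun h => hzim (hg z h)
  have hGz' : G.eval z = a * G.derivative.eval z := by
    rwa [IsRoot.def, Polynomial.map_sub, Polynomial.map_mul, map_C, ← derivative_map, eval_sub,
      eval_mul, eval_C, sub_eq_zero] at hz
  have hlog : G.derivative.eval z / G.eval z = 1 / a := by
    have hG'z : G.derivative.eval z ≠ 0 := fun h => hGz (by simp [hGz', h])
    rw [hGz', div_mul_cancel_right₀ hG'z, one_div]
  rw [(IsAlgClosed.splits G).eval_derivative_div_eval_of_ne_zero hGz] at hlog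
  have hroots : G.roots ≠ 0 := by
    intro h
    simp only [h, Multiset.map_zero, Multiset.sum_zero] at hlog
    have ha : (a : ℂ) = 0 := by simpa [eq_comm] using hlog
    exact hGz (by rw [hGz', ha, zero_mul])
  refine Complex.im_sum_one_div_sub_ne_zero hzim (fun w hw => hg w (isRoot_of_mem_roots hw))
    hroots ?_
  rw [hlog]
  simp

lemma allRealRoots_Tfac_C_mul_prod_X_sub_C_mul_X_pow {c : ℝ} (hc : c ≠ 0) (s : Multiset ℝ)
    (m : ℕ) : AllRealRoots (Tfac (C c * (s.map (X - C ·)).prod * X ^ m)) := by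
  induction s using Multiset.induction_on generalizing m with
  | empty =>
    rw [Multiset.map_zero, Multiset.prod_zero, mul_one, Tfac_C_mul_X_pow]
    exact allRealRoots_C_mul_X_pow (by positivity) m
  | cons a s ih =>
    have hsplit : C c * ((a ::ₘ s).map (X - C ·)).prod * X ^ m
        = (X - C a) * (C c * (s.map (X - C ·)).prod * X ^ m) := by
      rw [Multiset.map_cons, Multiset.prod_cons]
      ring
    have hshift : X * (C c * (s.map (X - C ·)).prod * X ^ m)
        = C c * (s.map (X - C ·)).prod * X ^ (m + 1) := by
      ring
    rw [hsplit, Tfac_X_sub_C_mul, hshift]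
    exact (ih (m + 1)).sub_C_mul_derivative a

theorem stmt_0 (p : ℝ[X]) (hp : AllRealRoots p) : AllRealRoots (Tfac p) := by
  have h := allRealRoots_Tfac_C_mul_prod_X_sub_C_mul_X_pow
    (leadingCoeff_ne_zero.mpr hp.ne_zero) p.roots 0
  rwa [pow_zero, mul_one, ← hp.splits.eq_prod_roots] at h
end

section
/- For each n ≥ 1, the n-th Laguerre polynomial L_n(x) has n distinct real roots, all of which are positive. -/
open Polynomial

/-!
Since `(D - 1) q = eˣ · D (e⁻ˣ q)`, Rolle's theorem applied to `e⁻ˣ q` shows that if `q` vanishes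
at `0` and has `k` positive roots, then `q' - q` has at least `k + 1` positive roots: one between
any two consecutive roots of `q` in `[0, ∞)`, and one beyond the largest, because `e⁻ˣ q → 0`
at `∞`. Starting from `Xⁿ`, whose root at `0` has multiplicity `n` and loses one order per step,
the polynomial `(D - 1)ⁿ Xⁿ = n! • Lₙ` therefore has `n` positive roots.
-/

section HalfLineRolle

open Set Filter Topology

theorem exists_isLocalMax_Ioi {f : ℝ → ℝ} {a x₀ : ℝ} (hfc : ContinuousOn f (Ici a))
    (hf : Tendsto f atTop (𝓝 (f a))) (hx₀ : a < x₀) (hlt : f a < f x₀) :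
    ∃ c ∈ Ioi a, IsLocalMax f c := by
  have hev : ∀ᶠ x in cocompact ℝ ⊓ 𝓟 (Ici a), f x ≤ f x₀ := by
    rw [cocompact_eq_atBot_atTop, inf_sup_right, (disjoint_atBot_principal_Ici a).eq_bot,
      bot_sup_eq]
    exact ((hf.eventually_lt_const hlt).mono fun _ => le_of_lt).filter_mono inf_le_left
  obtain ⟨c, hc, hmax⟩ := hfc.exists_isMaxOn' isClosed_Ici (mem_Ici.2 hx₀.le) hev
  have hac : a < c := hc.lt_of_ne <| by rintro rfl; exact (hmax (mem_Ici.2 hx₀.le)).not_gt hlt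
  exact ⟨c, hac, hmax.isLocalMax (Ici_mem_nhds hac)⟩

theorem exists_hasDerivAt_eq_zero_Ioi {f f' : ℝ → ℝ} {a : ℝ} (hfc : ContinuousOn f (Ici a))
    (hf : Tendsto f atTop (𝓝 (f a))) (hff' : ∀ x ∈ Ioi a, HasDerivAt f (f' x) x) :
    ∃ c ∈ Ioi a, f' c = 0 := by
  by_cases hconst : ∀ x ∈ Ioi a, f x = f a
  · have hc : a < a + 1 := lt_add_one a
    have heq : f =ᶠ[𝓝 (a + 1)] fun _ => f a := eventually_of_mem (Ioi_mem_nhds hc) hconst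
    exact ⟨a + 1, hc, (hff' _ hc).unique ((hasDerivAt_const _ _).congr_of_eventuallyEq heq)⟩
  push Not at hconst
  obtain ⟨x₀, hx₀, hne⟩ := hconst
  rcases hne.lt_or_gt with hlt | hgt
  · obtain ⟨c, hc, hmax⟩ := exists_isLocalMax_Ioi (f := -f) hfc.neg hf.neg hx₀ (neg_lt_neg hlt)
    have hmin : IsLocalMin f c := by simpa using hmax.neg
    exact ⟨c, hc, hmin.hasDerivAt_eq_zero (hff' c hc)⟩
  · obtain ⟨c, hc, hmax⟩ := exists_isLocalMax_Ioi hfc hf hx₀ hgt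
    exact ⟨c, hc, hmax.hasDerivAt_eq_zero (hff' c hc)⟩

end HalfLineRolle

namespace Polynomial

section DerivativeSubSelf

open Set Filter Topology

theorem hasDerivAt_eval_mul_exp_neg (q : ℝ[X]) (x : ℝ) :
    HasDerivAt (fun y => q.eval y * Real.exp (-y))
      ((derivative q - q).eval x * Real.exp (-x)) x := by
  refine ((q.hasDerivAt x).mul (hasDerivAt_neg x).exp).congr_deriv ?_
  rw [eval_sub]
  ring

theorem exists_isRoot_derivative_sub_self_Ioo (q : ℝ[X]) {a b : ℝ} (hab : a < b)
    (ha : q.IsRoot a) (hb : q.IsRoot b) : ∃ c ∈ Ioo a b, (derivative q - q).IsRoot c := by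
  obtain ⟨c, hc, hc0⟩ := exists_hasDerivAt_eq_zero hab (by fun_prop)
    (by simp [ha.eq_zero, hb.eq_zero]) fun x _ => q.hasDerivAt_eval_mul_exp_neg x
  exact ⟨c, hc, (mul_eq_zero.1 hc0).resolve_right (Real.exp_ne_zero _)⟩

theorem exists_isRoot_derivative_sub_self_Ioi (q : ℝ[X]) {a : ℝ} (ha : q.IsRoot a) :
    ∃ c ∈ Ioi a, (derivative q - q).IsRoot c := by
  have hlim : Tendsto (fun y => q.eval y * Real.exp (-y)) atTop
      (𝓝 (q.eval a * Real.exp (-a))) := by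
    simpa [ha.eq_zero, div_eq_mul_inv, Real.exp_neg] using q.tendsto_div_exp_atTop
  obtain ⟨c, hc, hc0⟩ := exists_hasDerivAt_eq_zero_Ioi (by fun_prop) hlim
    fun x _ => q.hasDerivAt_eval_mul_exp_neg x
  exact ⟨c, hc, (mul_eq_zero.1 hc0).resolve_right (Real.exp_ne_zero _)⟩

end DerivativeSubSelf

open Finset
open scoped Nat

theorem derivative_sub_self_ne_zero {q : ℝ[X]} (hq : q ≠ 0) : derivative q - q ≠ 0 := by
  rw [Ne, ← degree_eq_bot, degree_sub_eq_right_of_degree_lt (degree_derivative_lt hq),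
    degree_eq_bot]
  exact hq

theorem X_pow_dvd_derivative_sub_self {m : ℕ} {q : ℝ[X]} (h : X ^ (m + 1) ∣ q) :
    X ^ m ∣ derivative q - q := by
  obtain ⟨r, rfl⟩ := h
  refine ⟨(m + 1 : ℝ[X]) * r + X * derivative r - X * r, ?_⟩
  rw [derivative_mul, derivative_X_pow, C_eq_natCast]
  push_cast
  ring

theorem card_pos_roots_lt_derivative_sub_self {q : ℝ[X]} (hq : q ≠ 0) (h0 : q.IsRoot 0) :
    #{x ∈ q.roots.toFinset | 0 < x} < #{x ∈ (derivative q - q).roots.toFinset | 0 < x} := by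
  set s := insert 0 {x ∈ q.roots.toFinset | 0 < x}
  set t := {x ∈ (derivative q - q).roots.toFinset | 0 < x}
  have hs : ∀ x ∈ s, 0 ≤ x ∧ q.IsRoot x := by
    intro x hx
    rw [mem_insert, mem_filter, Multiset.mem_toFinset, mem_roots hq] at hx
    rcases hx with rfl | ⟨hx, hx0⟩
    exacts [⟨le_rfl, h0⟩, ⟨hx0.le, hx⟩]
  have hmem_t : ∀ z, 0 < z → (derivative q - q).IsRoot z → z ∈ t := fun z hz hzr => by
    simpa [t, derivative_sub_self_ne_zero hq, hz] using hzr
  have hne : s.Nonempty := insert_nonempty _ _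
  obtain ⟨c, hc, hcr⟩ := q.exists_isRoot_derivative_sub_self_Ioi (hs _ (s.max'_mem hne)).2
  have hct : c ∈ t := hmem_t c ((hs _ (s.max'_mem hne)).1.trans_lt hc) hcr
  -- `c` lies beyond every root of `q` in `[0, ∞)`: an extra root besides the interleaving ones.
  have hinter : #s ≤ #(t.erase c) + 1 := by
    refine card_le_of_interleaved fun x hx y hy hxy _ => ?_
    obtain ⟨z, ⟨hxz, hzy⟩, hzr⟩ :=
      q.exists_isRoot_derivative_sub_self_Ioo hxy (hs x hx).2 (hs y hy).2
    have hzc : z ≠ c := ((hzy.trans_le (s.le_max' y hy)).trans hc).ne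
    exact ⟨z, mem_erase.2 ⟨hzc, hmem_t z ((hs x hx).1.trans_lt hxz) hzr⟩, hxz, hzy⟩
  rwa [card_erase_add_one hct, card_insert_of_notMem (by simp)] at hinter

noncomputable def derivativeSubOne : Module.End ℝ ℝ[X] := derivative - 1

theorem derivativeSubOne_pow_succ_apply (k : ℕ) (q : ℝ[X]) :
    (derivativeSubOne ^ (k + 1)) q =
      derivative ((derivativeSubOne ^ k) q) - (derivativeSubOne ^ k) q := by
  rw [pow_succ', Module.End.mul_apply]
  rfl

theorem derivativeSubOne_pow_ne_zero {q : ℝ[X]} (hq : q ≠ 0) (k : ℕ) :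
    (derivativeSubOne ^ k) q ≠ 0 := by
  induction k with
  | zero => exact hq
  | succ k ih => rw [derivativeSubOne_pow_succ_apply]; exact derivative_sub_self_ne_zero ih

theorem X_pow_sub_dvd_derivativeSubOne_pow (n k : ℕ) :
    X ^ (n - k) ∣ (derivativeSubOne ^ k) (X ^ n) := by
  induction k with
  | zero => rfl
  | succ k ih =>
    rw [derivativeSubOne_pow_succ_apply]
    rcases Nat.lt_or_ge k n with hk | hk
    · exact X_pow_dvd_derivative_sub_self (by rwa [← Nat.sub_add_comm hk, Nat.add_sub_add_right])
    · rw [Nat.sub_eq_zero_of_le (by omega), pow_zero]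
      exact one_dvd _

theorem le_card_pos_roots_derivativeSubOne_pow {n k : ℕ} (hk : k ≤ n) :
    k ≤ #{x ∈ ((derivativeSubOne ^ k) (X ^ n)).roots.toFinset | 0 < x} := by
  induction k with
  | zero => exact Nat.zero_le _
  | succ k ih =>
    have h0 : ((derivativeSubOne ^ k) (X ^ n)).IsRoot 0 := by
      obtain ⟨r, hr⟩ := (dvd_pow_self X (by omega)).trans (X_pow_sub_dvd_derivativeSubOne_pow n k)
      simp [hr]
    rw [derivativeSubOne_pow_succ_apply]
    exact (ih (by omega)).trans_lt <| card_pos_roots_lt_derivative_sub_self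
      (derivativeSubOne_pow_ne_zero (pow_ne_zero n X_ne_zero) k) h0

theorem derivativeSubOne_pow_X_pow (n : ℕ) :
    (derivativeSubOne ^ n) (X ^ n) = (n ! : ℝ) • laguerre n := by
  have hcomm : Commute (-1) (derivative : Module.End ℝ ℝ[X]) :=
    (Commute.one_left (derivative : Module.End ℝ ℝ[X])).neg_left
  rw [derivativeSubOne, sub_eq_neg_add, hcomm.add_pow, LinearMap.sum_apply, laguerre, smul_sum]
  refine sum_congr rfl fun k hk => ?_
  have hkn : k ≤ n := Nat.lt_succ_iff.1 (mem_range.1 hk)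
  have hneg : (-1 : Module.End ℝ ℝ[X]) ^ k = algebraMap ℝ _ ((-1) ^ k) := by simp
  have hfac : (k ! : ℝ) * n.descFactorial (n - k) = n ! := by
    exact_mod_cast Nat.sub_sub_self hkn ▸ Nat.factorial_mul_descFactorial (n.sub_le k)
  rw [hneg, Module.End.mul_apply, Module.End.mul_apply, Module.algebraMap_end_apply,
    Module.End.natCast_apply, map_nsmul, Module.End.pow_apply, iterate_derivative_X_pow_eq_smul,
    Nat.sub_sub_self hkn, ← Nat.cast_smul_eq_nsmul ℝ, smul_smul, smul_smul, smul_eq_C_mul,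
    smul_eq_C_mul, ← mul_assoc, ← C_mul]
  congr 2
  field_simp
  linear_combination (n.choose k : ℝ) * hfac

end Polynomial

theorem stmt_5_general (n : ℕ) :
    ∃ s : Finset ℝ, s.card = n ∧ ∀ x ∈ s, 0 < x ∧ (laguerre n).IsRoot x := by
  obtain ⟨s, hs, hcard⟩ :=
    Finset.exists_subset_card_eq (le_card_pos_roots_derivativeSubOne_pow le_rfl)
  rw [derivativeSubOne_pow_X_pow, roots_smul_nonzero _ (by positivity)] at hs
  refine ⟨s, hcard, fun x hx => ?_⟩
  obtain ⟨hroot, hpos⟩ := Finset.mem_filter.1 (hs hx)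
  exact ⟨hpos, isRoot_of_mem_roots (Multiset.mem_toFinset.1 hroot)⟩

theorem stmt_5 (n : ℕ) (hn : 1 ≤ n) :
    ∃ s : Finset ℝ, s.card = n ∧ ∀ x ∈ s, 0 < x ∧ (laguerre n).IsRoot x :=
  stmt_5_general n
end
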